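/- arXiv:2212.06738 — 10 statements merged into one kernel-verified Lean document; each statement's English description precedes it below -/
import Mathlib

section
/- Every commutative unital ring R admits an absolute integral closure: there exist a commutative ring S and an injective ring homomorphism R → S such that S is integral over R, the extension R ⊆ S is tight, and S is absolutely integrally closed. -/
/-!
A ring `k` embeds into the ring obtained by adjoining a root `X_p` of every nonconstant monic `p`
over `k`: a relation `C x = ∑ a_p · p(X_p)` involves finitely many `p`, which all acquire roots
in an iterated `AdjoinRoot`, where the right side vanishes. Iterating this ω times and passing to
the direct limit gives an ai closed ring `T` containing `R`. A root in `T` of a monic polynomial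
over the integral closure `C` of `R` in `T` is integral over `R`, so `C` is ai closed and integral
over `R`. Finally, if `J` is an ideal of `C` maximal among those meeting `R` in `0`, then for
`c ∉ J` the ideal `(c) + J` contains some `r ≠ 0` of `R`, which makes `C ⧸ J` tight over `R`;
integrality and ai closedness pass to quotients.
-/

universe u

open Polynomial

/-- A ring extension `f : R →+* S` is *tight* if every nonzero ideal of `S` contracts to a
nonzero ideal of `R`; equivalently, every nonzero `s : S` admits `t : S` and a nonzero `r : R`
with `s * t = f r`. -/
def Tight {R S : Type*} [CommRing R] [CommRing S] (f : R →+* S) : Prop :=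
  ∀ s : S, s ≠ 0 → ∃ t : S, ∃ r : R, r ≠ 0 ∧ s * t = f r

/-- A commutative ring `S` is *absolutely integrally closed* if every monic polynomial of
positive degree over `S` has a root in `S`. -/
def AIClosed (S : Type*) [CommRing S] : Prop :=
  ∀ p : Polynomial S, p.Monic → 0 < p.degree → ∃ x : S, p.IsRoot x

/-- `f : R →+* S` realizes `S` as an *absolute integral closure* of `R`: it is injective,
integral, tight, and `S` is absolutely integrally closed. -/
def IsAIC {R S : Type*} [CommRing R] [CommRing S] (f : R →+* S) : Prop :=
  Function.Injective f ∧ f.IsIntegral ∧ Tight f ∧ AIClosed S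

theorem AIClosed.of_surjective {A B : Type*} [CommRing A] [CommRing B] (hA : AIClosed A)
    (f : A →+* B) (hf : Function.Surjective f) : AIClosed B := by
  intro q hq hdeg
  have : Nontrivial B := nontrivial_iff.1 (nontrivial_of_ne q 0 (ne_zero_of_degree_gt hdeg))
  obtain ⟨p, rfl, hpdeg, hp⟩ := lifts_and_degree_eq_and_monic
    ((lifts_iff_coeff_lifts q).2 fun n => hf _) hq
  obtain ⟨x, hx⟩ := hA p hp (hpdeg ▸ hdeg)
  exact ⟨f x, by rw [IsRoot, eval_map, eval₂_at_apply, hx.eq_zero, map_zero]⟩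

theorem AIClosed.integralClosure {R A : Type*} [CommRing R] [CommRing A] [Algebra R A]
    (hA : AIClosed A) : AIClosed (_root_.integralClosure R A) := by
  intro p hp hdeg
  have hval : Function.Injective (algebraMap (_root_.integralClosure R A) A) :=
    Subtype.val_injective
  obtain ⟨x, hx⟩ := hA (p.map (algebraMap _ A)) (hp.map _)
    (by rwa [degree_map_eq_of_injective hval])
  rw [IsRoot, eval_map] at hx
  have hxC : IsIntegral (_root_.integralClosure R A) x := ⟨p, hp, hx⟩
  refine ⟨⟨x, isIntegral_trans x hxC⟩, hval ?_⟩
  rw [map_zero, ← eval₂_hom]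
  exact hx

section TightQuotient

variable {R C : Type*} [CommRing R] [CommRing C] {f : R →+* C}

theorem injective_quotientMk_comp_iff {J : Ideal C} :
    Function.Injective ((Ideal.Quotient.mk J).comp f) ↔ J.comap f = ⊥ := by
  rw [RingHom.injective_iff_ker_eq_bot, ← RingHom.comap_ker, Ideal.mk_ker]

theorem tight_quotientMk_comp {J : Ideal C} (hJ : Maximal (fun I : Ideal C => I.comap f = ⊥) J) :
    Tight ((Ideal.Quotient.mk J).comp f) := by
  intro s hs
  obtain ⟨c, rfl⟩ := Ideal.Quotient.mk_surjective s
  have hcJ : c ∉ J := fun hc => hs (Ideal.Quotient.eq_zero_iff_mem.2 hc)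
  have hne : (Ideal.span {c} ⊔ J).comap f ≠ ⊥ := fun hbot =>
    hcJ (hJ.2 hbot le_sup_right (Ideal.mem_sup_left (Ideal.mem_span_singleton_self c)))
  obtain ⟨r, hr, hr0⟩ := Submodule.exists_mem_ne_zero_of_ne_bot hne
  obtain ⟨t, b, hb, hfr⟩ := Ideal.mem_span_singleton_sup.1 (Ideal.mem_comap.1 hr)
  refine ⟨Ideal.Quotient.mk J t, r, hr0, ?_⟩
  rw [RingHom.comp_apply, ← hfr, map_add, Ideal.Quotient.eq_zero_iff_mem.2 hb, add_zero,
    map_mul, mul_comm]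

theorem exists_maximal_comap_eq_bot (hf : Function.Injective f) :
    ∃ J : Ideal C, Maximal (fun I : Ideal C => I.comap f = ⊥) J := by
  have hsup : ∀ c ⊆ {I : Ideal C | I.comap f = ⊥}, IsChain (· ≤ ·) c → c.Nonempty →
      (sSup c).comap f = ⊥ := by
    rintro c hc hchain ⟨I, hI⟩
    refine eq_bot_iff.2 fun r hr => ?_
    obtain ⟨I, hIc, hrI⟩ := (Submodule.mem_sSup_of_directed ⟨I, hI⟩ hchain.directedOn).1 hr
    exact (hc hIc).le hrI
  obtain ⟨J, -, hJ⟩ := zorn_le_nonempty₀ {I : Ideal C | I.comap f = ⊥}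
    (fun c hc hchain I hI => ⟨sSup c, hsup c hc hchain ⟨I, hI⟩, fun I hI => le_sSup hI⟩) ⊥
    (Ideal.comap_bot_of_injective f hf)
  exact ⟨J, hJ⟩

end TightQuotient

theorem AdjoinRoot.of_injective_of_monic {A : Type*} [CommRing A] {g : A[X]} (hg : g.Monic)
    (hdeg : 0 < g.degree) : Function.Injective (AdjoinRoot.of g) := by
  nontriviality A
  intro a b h
  have hC : ∀ c : A, C c %ₘ g = C c := fun c =>
    (modByMonic_eq_self_iff hg).2 (degree_C_le.trans_lt hdeg)
  have := congrArg (AdjoinRoot.modByMonicHom hg) h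
  rwa [AdjoinRoot.of, RingHom.comp_apply, RingHom.comp_apply, AdjoinRoot.modByMonicHom_mk,
    AdjoinRoot.modByMonicHom_mk, hC, hC, C_inj] at this

section AdjoinMonic

variable (k : Type u) [CommRing k]

abbrev NonconstMonic : Type u := {p : k[X] // p.Monic ∧ 0 < p.degree}

variable {k} in
theorem exists_injective_forall_root (s : Finset (NonconstMonic k)) :
    ∃ (T : Type u) (_ : CommRing T) (g : k →+* T),
      Function.Injective g ∧ ∀ p ∈ s, ∃ x : T, p.1.eval₂ g x = 0 := by
  classical
  induction s using Finset.induction with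
  | empty => exact ⟨k, inferInstance, RingHom.id k, Function.injective_id, by simp⟩
  | insert p s _ ih =>
    obtain ⟨T, _, g, hg, hroots⟩ := ih
    have hmonic : (p.1.map g).Monic := p.2.1.map g
    have hdeg : 0 < (p.1.map g).degree := by rw [degree_map_eq_of_injective hg]; exact p.2.2
    refine ⟨AdjoinRoot (p.1.map g), inferInstance, (AdjoinRoot.of _).comp g,
      (AdjoinRoot.of_injective_of_monic hmonic hdeg).comp hg, ?_⟩
    rintro q hq
    rcases Finset.mem_insert.1 hq with rfl | hq
    · exact ⟨AdjoinRoot.root _, by rw [← eval₂_map, AdjoinRoot.eval₂_root]⟩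
    · obtain ⟨x, hx⟩ := hroots q hq
      exact ⟨AdjoinRoot.of _ x, by rw [← hom_eval₂, hx, map_zero]⟩

open MvPolynomial in
noncomputable def AdjoinMonic.relations : Ideal (MvPolynomial (NonconstMonic k) k) :=
  Ideal.span (Set.range fun p : NonconstMonic k => p.1.eval₂ C (X p))

abbrev AdjoinMonic : Type u :=
  MvPolynomial (NonconstMonic k) k ⧸ AdjoinMonic.relations k

namespace AdjoinMonic

theorem eq_zero_of_C_mem_relations {x : k} (hx : MvPolynomial.C x ∈ relations k) : x = 0 := by
  classical
  obtain ⟨c, hc⟩ := (Finsupp.mem_span_range_iff_exists_finsupp (R := MvPolynomial _ k)).1 hx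
  obtain ⟨T, _, g, hg, hroots⟩ := exists_injective_forall_root c.support
  choose root hroot using hroots
  let φ := MvPolynomial.eval₂Hom g fun p => if h : p ∈ c.support then root p h else 0
  have hφ : ∀ p ∈ c.support, φ (p.1.eval₂ MvPolynomial.C (MvPolynomial.X p)) = 0 := by
    intro p hp
    rw [hom_eval₂, MvPolynomial.eval₂Hom_comp_C, MvPolynomial.eval₂Hom_X', dif_pos hp]
    exact hroot p hp
  refine hg ?_
  rw [map_zero, ← MvPolynomial.eval₂Hom_C g (fun p => if h : p ∈ c.support then root p h else 0),
    ← hc, Finsupp.sum, map_sum]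
  exact Finset.sum_eq_zero fun p hp => by rw [smul_eq_mul, map_mul, hφ p hp, mul_zero]

theorem algebraMap_injective : Function.Injective (algebraMap k (AdjoinMonic k)) := by
  rw [injective_iff_map_eq_zero]
  intro x hx
  exact eq_zero_of_C_mem_relations k (Ideal.Quotient.eq_zero_iff_mem.1 hx)

theorem exists_root {p : k[X]} (hp : p.Monic) (hdeg : 0 < p.degree) :
    ∃ x : AdjoinMonic k, p.eval₂ (algebraMap k (AdjoinMonic k)) x = 0 :=
  ⟨Ideal.Quotient.mk _ (MvPolynomial.X ⟨p, hp, hdeg⟩), by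
    rw [IsScalarTower.algebraMap_eq k (MvPolynomial (NonconstMonic k) k),
      Ideal.Quotient.algebraMap_eq, MvPolynomial.algebraMap_eq, ← hom_eval₂,
      Ideal.Quotient.eq_zero_iff_mem]
    exact Ideal.subset_span ⟨_, rfl⟩⟩

end AdjoinMonic

end AdjoinMonic

section NatLERec

variable {A : ℕ → Type*} [∀ n, CommRing (A n)] (φ : ∀ n, A n →+* A (n + 1))

def natLERec (m n : ℕ) (h : m ≤ n) : A m →+* A n :=
  Nat.leRecOn h (fun {k} g => (φ k).comp g) (RingHom.id (A m))

theorem natLERec_self (m : ℕ) : natLERec φ m m le_rfl = RingHom.id (A m) :=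
  Nat.leRecOn_self _

theorem natLERec_succ {m n : ℕ} (h : m ≤ n) :
    natLERec φ m (n + 1) (h.trans n.le_succ) = (φ n).comp (natLERec φ m n h) :=
  Nat.leRecOn_succ h _

theorem natLERec_succ_self (n : ℕ) : natLERec φ n (n + 1) n.le_succ = φ n := by
  rw [natLERec_succ φ le_rfl, natLERec_self, RingHom.comp_id]

theorem natLERec_trans {l m n : ℕ} (hlm : l ≤ m) (hmn : m ≤ n) :
    natLERec φ l n (hlm.trans hmn) = (natLERec φ m n hmn).comp (natLERec φ l m hlm) := by
  induction hmn with
  | refl => rw [natLERec_self, RingHom.id_comp]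
  | step hmn ih =>
    rw [natLERec_succ φ (hlm.trans hmn), ih, natLERec_succ φ hmn, RingHom.comp_assoc]

theorem natLERec_injective (hφ : ∀ n, Function.Injective (φ n)) {m n : ℕ} (h : m ≤ n) :
    Function.Injective (natLERec φ m n h) := by
  induction h with
  | refl => rw [natLERec_self]; exact Function.injective_id
  | step h ih => rw [natLERec_succ φ h]; exact (hφ _).comp ih

instance natLERec.directedSystem : DirectedSystem A fun m n h => natLERec φ m n h where
  map_self _ _ := by rw [natLERec_self]; rfl
  map_map _ _ _ hlm hmn x := by rw [← RingHom.comp_apply, ← natLERec_trans]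

theorem Ring.DirectLimit.of_natLERec_comp_succ (n : ℕ) :
    (of A (fun i j h => natLERec φ i j h) (n + 1)).comp (φ n) =
      of A (fun i j h => natLERec φ i j h) n := by
  ext x
  rw [RingHom.comp_apply, ← natLERec_succ_self φ n, of_f]

theorem AIClosed.directLimit_natLERec
    (hroot : ∀ n (p : (A n)[X]), p.Monic → 0 < p.degree → ∃ x, p.eval₂ (φ n) x = 0) :
    AIClosed (Ring.DirectLimit A fun i j h => natLERec φ i j h) := by
  intro q hq hdeg
  have : Nontrivial (Ring.DirectLimit A fun i j h => natLERec φ i j h) :=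
    nontrivial_iff.1 (nontrivial_of_ne q 0 (ne_zero_of_degree_gt hdeg))
  obtain ⟨n, p₀, hp₀⟩ := Ring.DirectLimit.Polynomial.exists_of q
  obtain ⟨p, rfl, hpdeg, hp⟩ := lifts_and_degree_eq_and_monic ⟨p₀, hp₀⟩ hq
  obtain ⟨x, hx⟩ := hroot n p hp (hpdeg ▸ hdeg)
  refine ⟨Ring.DirectLimit.of _ _ (n + 1) x, ?_⟩
  rw [IsRoot, eval_map, ← Ring.DirectLimit.of_natLERec_comp_succ, ← hom_eval₂, hx, map_zero]

end NatLERec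

noncomputable def monicTower (R : Type u) [CommRing R] : ℕ → CommRingCat.{u}
  | 0 => CommRingCat.of R
  | n + 1 => CommRingCat.of (AdjoinMonic (monicTower R n))

noncomputable def monicTower.step (R : Type u) [CommRing R] (n : ℕ) :
    monicTower R n →+* monicTower R (n + 1) :=
  algebraMap (monicTower R n) (AdjoinMonic (monicTower R n))

theorem exists_injective_aiClosed (R : Type u) [CommRing R] :
    ∃ (T : Type u) (_ : CommRing T) (f : R →+* T), Function.Injective f ∧ AIClosed T := by
  let φ := monicTower.step R
  let f : R →+* Ring.DirectLimit (fun n => monicTower R n) fun i j h => natLERec φ i j h :=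
    Ring.DirectLimit.of (fun n => monicTower R n) (fun i j h => natLERec φ i j h) 0
  refine ⟨_, inferInstance, f, ?_, ?_⟩
  · exact Ring.DirectLimit.of_injective _
      (fun _ _ => natLERec_injective φ fun n => AdjoinMonic.algebraMap_injective _) 0
  · exact AIClosed.directLimit_natLERec φ fun n _ => AdjoinMonic.exists_root _

/-- Every commutative unital ring admits an absolute integral closure. -/
theorem exists_absolute_integral_closure (R : Type u) [CommRing R] :
    ∃ (S : Type u) (_ : CommRing S) (f : R →+* S), IsAIC f := by
  obtain ⟨T, _, f, hf, hT⟩ := exists_injective_aiClosed R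
  let := f.toAlgebra
  let C := integralClosure R T
  have hC : Function.Injective (algebraMap R C) := fun a b hab => hf (congrArg Subtype.val hab)
  obtain ⟨J, hJ⟩ := exists_maximal_comap_eq_bot hC
  refine ⟨C ⧸ J, inferInstance, (Ideal.Quotient.mk J).comp (algebraMap R C),
    injective_quotientMk_comp_iff.2 hJ.1, ?_, tight_quotientMk_comp hJ,
    hT.integralClosure.of_surjective _ Ideal.Quotient.mk_surjective⟩
  exact RingHom.IsIntegral.trans _ _ (algebraMap_isIntegral_iff.2 inferInstance)
    (RingHom.isIntegral_of_surjective _ Ideal.Quotient.mk_surjective)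
end

section
/- Let R be an integral domain and let S be the integral closure of R in an algebraic closure of its field of fractions Frac(R). Then S is an absolute integral closure of R: the inclusion R → S is injective and integral, the extension is tight, and S is absolutely integrally closed. -/
open Polynomial

theorem tight_algebraMap_of_isAlgebraic {R S : Type*} [CommRing R] [CommRing S] [IsDomain S]
    [Algebra R S] [Algebra.IsAlgebraic R S] : Tight (algebraMap R S) := by
  intro s hs
  obtain ⟨r, hr, hr0⟩ : ∃ r ∈ (Ideal.span {s}).comap (algebraMap R S), r ≠ 0 :=
    Submodule.exists_mem_ne_zero_of_ne_bot <| Ideal.comap_ne_bot_of_algebraic_mem hs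
      (Ideal.mem_span_singleton_self s) (Algebra.IsAlgebraic.isAlgebraic s)
  obtain ⟨t, ht⟩ := Ideal.mem_span_singleton'.mp hr
  exact ⟨t, r, hr0, by rw [mul_comm, ht]⟩

theorem aiClosed_of_isAlgClosed (L : Type*) [Field L] [IsAlgClosed L] : AIClosed L :=
  fun p _ hp => IsAlgClosed.exists_root p hp.ne'

theorem aiClosed_integralClosure_s1 {R L : Type*} [CommRing R] [CommRing L] [Nontrivial L]
    [Algebra R L] (hL : AIClosed L) : AIClosed (integralClosure R L) := by
  intro p hp hdeg
  obtain ⟨x, hx⟩ := hL (p.map (algebraMap _ L)) (hp.map _) (by rwa [hp.degree_map])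
  have hxS : IsIntegral (integralClosure R L) x := ⟨p, hp, by rwa [← eval_map]⟩
  let y : integralClosure R L := ⟨x, isIntegral_trans x hxS⟩
  refine ⟨y, Subtype.val_injective ?_⟩
  rw [IsRoot, eval_map_algebraMap] at hx
  rw [← coe_aeval_eq_eval]
  exact (aeval_algebraMap_apply L y p).symm.trans hx

/-- For a domain `R`, the integral closure of `R` in an algebraic closure of its fraction
field is an absolute integral closure of `R`. -/
theorem plus_isAIC (R : Type u) [CommRing R] [IsDomain R] :
    IsAIC (algebraMap R (integralClosure R (AlgebraicClosure (FractionRing R)))) := by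
  have := FaithfulSMul.trans R (FractionRing R) (AlgebraicClosure (FractionRing R))
  have := FaithfulSMul.tower_bot R (integralClosure R (AlgebraicClosure (FractionRing R)))
    (AlgebraicClosure (FractionRing R))
  exact ⟨FaithfulSMul.algebraMap_injective _ _, fun s => Algebra.IsIntegral.isIntegral s,
    tight_algebraMap_of_isAlgebraic, aiClosed_integralClosure_s1 (aiClosed_of_isAlgClosed _)⟩
end

section
/- Let R be an integral domain and let S be any absolute integral closure of R. Then S is isomorphic as an R-algebra to R⁺, the integral closure of R in an algebraic closure of Frac(R). In particular, any two absolute integral closures of an integral domain R are R-isomorphic. -/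
open Polynomial

theorem Tight.isDomain {R S : Type*} [CommRing R] [IsDomain R] [CommRing S] {f : R →+* S}
    (hf : Tight f) (hinj : Function.Injective f) : IsDomain S :=
  have : Nontrivial S := hinj.nontrivial
  have : NoZeroDivisors S := ⟨fun {a b} hab ↦ by
    by_contra! h
    obtain ⟨t, r, hr, hrt⟩ := hf a h.1
    obtain ⟨t', r', hr', hrt'⟩ := hf b h.2
    refine mul_ne_zero hr hr' (hinj ?_)
    rw [map_mul, map_zero, ← hrt, ← hrt', mul_mul_mul_comm, hab, zero_mul]⟩
  NoZeroDivisors.to_isDomain S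

namespace AIClosed

variable {S : Type*} [CommRing S]

theorem exists_eq_multiset_prod_X_sub_C (hS : AIClosed S) {p : S[X]} (hp : p.Monic) :
    ∃ m : Multiset S, p = (m.map fun s ↦ X - C s).prod := by
  induction hn : p.natDegree generalizing p with
  | zero => exact ⟨0, by simpa using hp.natDegree_eq_zero.mp hn⟩
  | succ n ih =>
    nontriviality S
    obtain ⟨s, hs⟩ := hS p hp (natDegree_pos_iff_degree_pos.mp (by omega))
    obtain ⟨q, rfl⟩ := dvd_iff_isRoot.mpr hs
    have hq : q.Monic := (monic_X_sub_C s).of_mul_monic_left hp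
    rw [(monic_X_sub_C s).natDegree_mul hq, natDegree_X_sub_C] at hn
    obtain ⟨m, rfl⟩ := ih hq (by omega)
    exact ⟨s ::ₘ m, by simp⟩

theorem exists_algebraMap_eq_of_isIntegral (hS : AIClosed S) {L : Type*} [CommRing L] [IsDomain L]
    [Algebra S L] {x : L} (hx : IsIntegral S x) : ∃ s, algebraMap S L s = x := by
  obtain ⟨p, hp, hpx⟩ := hx
  obtain ⟨m, rfl⟩ := hS.exists_eq_multiset_prod_X_sub_C hp
  simp only [eval₂_multiset_prod, Multiset.map_map, Function.comp_apply, eval₂_sub, eval₂_X,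
    eval₂_C, Multiset.prod_eq_zero_iff, Multiset.mem_map, sub_eq_zero] at hpx
  obtain ⟨s, -, hs⟩ := hpx
  exact ⟨s, hs.symm⟩

theorem isIntegrallyClosed [IsDomain S] (hS : AIClosed S) : IsIntegrallyClosed S :=
  (isIntegrallyClosed_iff (FractionRing S)).mpr hS.exists_algebraMap_eq_of_isIntegral

/-- An element algebraic over `K` has a nonzero `S`-multiple that is integral over `S`, hence lies
in `S`; so `K` has no proper algebraic extension. -/
theorem isAlgClosed [IsDomain S] (hS : AIClosed S) (K : Type*) [Field K] [Algebra S K]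
    [IsFractionRing S K] : IsAlgClosed K := by
  have hsurj : Function.Surjective (algebraMap K (AlgebraicClosure K)) := by
    intro y
    obtain ⟨a, ha, hay⟩ := ((IsFractionRing.isAlgebraic_iff S K _).mpr
      (Algebra.IsAlgebraic.isAlgebraic y)).exists_integral_multiple
    obtain ⟨t, ht⟩ := hS.exists_algebraMap_eq_of_isIntegral hay
    have ha' : algebraMap S (AlgebraicClosure K) a ≠ 0 := by
      rw [IsScalarTower.algebraMap_apply S K, _root_.map_ne_zero]
      exact IsFractionRing.to_map_ne_zero_of_mem_nonZeroDivisors (mem_nonZeroDivisors_of_ne_zero ha)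
    refine ⟨algebraMap S K t / algebraMap S K a, ?_⟩
    rw [map_div₀, ← IsScalarTower.algebraMap_apply, ← IsScalarTower.algebraMap_apply, ht,
      Algebra.smul_def, mul_div_cancel_left₀ _ ha']
  exact IsAlgClosed.of_ringEquiv _ _
    (RingEquiv.ofBijective _ ⟨(algebraMap K _).injective, hsurj⟩).symm

end AIClosed

noncomputable def algEquivIntegralClosureAlgebraicClosure (R S : Type*) [CommRing R] [IsDomain R]
    [CommRing S] [IsDomain S] [Algebra R S] [FaithfulSMul R S] [Algebra.IsIntegral R S]
    [IsIntegrallyClosed S] [IsAlgClosed (FractionRing S)] :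
    S ≃ₐ[R] integralClosure R (AlgebraicClosure (FractionRing R)) :=
  letI := FractionRing.liftAlgebra R (FractionRing S)
  have := FractionRing.isScalarTower_liftAlgebra R (FractionRing S)
  have : Algebra.IsAlgebraic R (FractionRing S) :=
    (IsFractionRing.isAlgebraic_iff' R S _).mp inferInstance
  have : IsAlgClosure (FractionRing R) (FractionRing S) :=
    ⟨‹_›, ⟨fun x ↦ (IsFractionRing.isAlgebraic_iff R (FractionRing R) _).mp
      (Algebra.IsAlgebraic.isAlgebraic x)⟩⟩
  (IsIntegralClosure.equiv R S (FractionRing S) (integralClosure R (FractionRing S))).trans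
    ((IsAlgClosure.equiv (FractionRing R) (FractionRing S) _).restrictScalars R).mapIntegralClosure

/-- Any absolute integral closure of a domain `R` is `R`-isomorphic to `R⁺`, the integral
closure of `R` in an algebraic closure of `Frac(R)`. -/
theorem aic_of_domain_unique (R : Type u) [CommRing R] [IsDomain R]
    (S : Type v) [CommRing S] (f : R →+* S) (hf : IsAIC f) :
    ∃ e : S ≃+* integralClosure R (AlgebraicClosure (FractionRing R)),
      e.toRingHom.comp f =
        algebraMap R (integralClosure R (AlgebraicClosure (FractionRing R))) := by
  obtain ⟨hinj, hint, htight, hai⟩ := hf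
  let _ : Algebra R S := f.toAlgebra
  have : IsDomain S := htight.isDomain hinj
  have : FaithfulSMul R S := (faithfulSMul_iff_algebraMap_injective R S).mpr hinj
  have : Algebra.IsIntegral R S := ⟨hint⟩
  have : IsIntegrallyClosed S := hai.isIntegrallyClosed
  have : IsAlgClosed (FractionRing S) := hai.isAlgClosed _
  let e := algEquivIntegralClosureAlgebraicClosure R S
  exact ⟨e.toRingEquiv, RingHom.ext e.commutes⟩
end

section
/- Let R ⊆ T be commutative rings with T absolutely integrally closed. Then the integral closure of R in T is itself absolutely integrally closed. -/
open Polynomial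

/-- A root in `T` of a monic polynomial over `S` is integral over `S`, hence already comes from
`S` when `S` is integrally closed in `T`. -/
theorem AIClosed.of_isIntegrallyClosedIn {S T : Type*} [CommRing S] [CommRing T] [Algebra S T]
    [IsIntegrallyClosedIn S T] (hT : AIClosed T) : AIClosed S := by
  intro p hp hdeg
  have hinj := IsIntegralClosure.algebraMap_injective S S T
  obtain ⟨x, hx⟩ := hT (p.map (algebraMap S T)) (hp.map _)
    (by rwa [degree_map_eq_of_injective hinj])
  have hx_int : IsIntegral S x := ⟨p, hp, by rwa [IsRoot, eval_map] at hx⟩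
  obtain ⟨y, rfl⟩ := (IsIntegralClosure.isIntegral_iff (A := S)).mp hx_int
  exact ⟨y, hx.of_map hinj⟩

theorem aiClosed_integralClosure_general (R T : Type*) [CommRing R] [CommRing T] [Algebra R T]
    (hT : AIClosed T) :
    AIClosed (integralClosure R T) :=
  hT.of_isIntegrallyClosedIn

/-- If `R ⊆ T` and `T` is absolutely integrally closed, then the integral closure of `R`
in `T` is absolutely integrally closed. -/
theorem aiClosed_integralClosure (R T : Type*) [CommRing R] [CommRing T] [Algebra R T]
    (hinj : Function.Injective (algebraMap R T)) (hT : AIClosed T) :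
    AIClosed (integralClosure R T) :=
  aiClosed_integralClosure_general R T hT
end

section
/- Let A be a finite index set, and for each a ∈ A let R_a be an integral domain and S_a an absolute integral closure of R_a. Then the product ring ∏_{a∈A} S_a, equipped with the product of the structure maps, is an absolute integral closure of ∏_{a∈A} R_a. -/
open Polynomial

def RingHom.piMap {ι : Type*} {R S : ι → Type*} [∀ i, CommRing (R i)] [∀ i, CommRing (S i)]
    (f : ∀ i, R i →+* S i) : (∀ i, R i) →+* ∀ i, S i :=
  RingHom.pi fun i => (f i).comp (Pi.evalRingHom R i)

namespace Polynomial

theorem natDegree_mul_X_pow_sub_natDegree_le {R : Type*} [Semiring R] {p : R[X]} (N : ℕ)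
    (hp : p.natDegree ≤ N) : (p * X ^ (N - p.natDegree)).natDegree ≤ N :=
  natDegree_mul_le.trans <| by grw [natDegree_X_pow_le]; omega

theorem Monic.coeff_mul_X_pow_sub_natDegree {R : Type*} [Semiring R] {p : R[X]} (hp : p.Monic)
    {N : ℕ} (hN : p.natDegree ≤ N) : (p * X ^ (N - p.natDegree)).coeff N = 1 := by
  rw [coeff_mul_X_pow', if_pos (Nat.sub_le _ _), Nat.sub_sub_self hN]
  exact hp

variable {ι : Type*} [Finite ι] {R : ι → Type*} [∀ i, Semiring (R i)]

theorem map_evalRingHom_piEquiv_symm (p : ∀ i, (R i)[X]) (i : ι) :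
    ((piEquiv R).symm p).map (Pi.evalRingHom R i) = p i :=
  congr_fun ((piEquiv R).apply_symm_apply p) i

theorem coeff_piEquiv_symm (p : ∀ i, (R i)[X]) (n : ℕ) (i : ι) :
    ((piEquiv R).symm p).coeff n i = (p i).coeff n := by
  rw [← map_evalRingHom_piEquiv_symm p i, coeff_map]
  rfl

-- Phrased via `coeff N = 1` since padding to `natDegree = N` is impossible over the zero ring.
theorem monic_piEquiv_symm {p : ∀ i, (R i)[X]} {N : ℕ} (hdeg : ∀ i, (p i).natDegree ≤ N)
    (hcoeff : ∀ i, (p i).coeff N = 1) : ((piEquiv R).symm p).Monic := by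
  refine monic_of_natDegree_le_of_coeff_eq_one N
    (natDegree_le_iff_coeff_eq_zero.2 fun n hn => ?_) ?_ <;> ext i
  · rw [coeff_piEquiv_symm]
    exact coeff_eq_zero_of_natDegree_lt ((hdeg i).trans_lt hn)
  · rw [coeff_piEquiv_symm]
    exact hcoeff i

end Polynomial

section PiMap

variable {ι : Type*} {R S : ι → Type*} [∀ i, CommRing (R i)] [∀ i, CommRing (S i)]
  (f : ∀ i, R i →+* S i)

@[simp]
theorem RingHom.piMap_apply (r : ∀ i, R i) (i : ι) : piMap f r i = f i (r i) :=
  rfl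

theorem RingHom.eval₂_piMap_apply (p : (∀ i, R i)[X]) (x : ∀ i, S i) (i : ι) :
    p.eval₂ (piMap f) x i = (p.map (Pi.evalRingHom R i)).eval₂ (f i) (x i) := by
  rw [eval₂_map]
  exact hom_eval₂ p (piMap f) (Pi.evalRingHom S i) x

theorem RingHom.IsIntegral.piMap [_root_.Finite ι] (hf : ∀ i, (f i).IsIntegral) :
    (RingHom.piMap f).IsIntegral := by
  intro x
  choose p hp_monic hp_root using fun i => hf i (x i)
  obtain ⟨N, hN⟩ := Finite.exists_le fun i => (p i).natDegree
  refine ⟨(piEquiv R).symm fun i => p i * X ^ (N - (p i).natDegree),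
    monic_piEquiv_symm (fun i => natDegree_mul_X_pow_sub_natDegree_le N (hN i))
      (fun i => (hp_monic i).coeff_mul_X_pow_sub_natDegree (hN i)), funext fun i => ?_⟩
  rw [RingHom.eval₂_piMap_apply, map_evalRingHom_piEquiv_symm, eval₂_mul, hp_root i, zero_mul,
    Pi.zero_apply]

theorem Tight.piMap (hf : ∀ i, Tight (f i)) : Tight (RingHom.piMap f) := by
  classical
  intro s hs
  obtain ⟨i, hi⟩ := Function.ne_iff.1 hs
  obtain ⟨t, r, hr, hst⟩ := hf i (s i) hi
  refine ⟨Pi.single i t, Pi.single i r, Pi.single_eq_zero_iff.not.2 hr, funext fun j => ?_⟩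
  rcases eq_or_ne j i with rfl | hj
  · simpa using hst
  · simp [Pi.single_eq_of_ne hj]

end PiMap

theorem AIClosed.pi {ι : Type*} {S : ι → Type*} [∀ i, CommRing (S i)]
    (hS : ∀ i, AIClosed (S i)) : AIClosed (∀ i, S i) := by
  intro p hp hdeg
  have root : ∀ i, ∃ y, (p.map (Pi.evalRingHom S i)).IsRoot y := fun i => by
    obtain _ | _ := subsingleton_or_nontrivial (S i)
    · exact ⟨0, Subsingleton.elim _ _⟩
    · exact hS i _ (hp.map _) (by rwa [hp.degree_map])
  choose x hx using root
  exact ⟨x, funext fun i => (eval_map_apply (Pi.evalRingHom S i) x).symm.trans (hx i)⟩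

theorem isAIC_pi_of_finite_general (A : Type u) [Finite A]
    (R : A → Type v) [∀ a, CommRing (R a)]
    (S : A → Type w) [∀ a, CommRing (S a)]
    (f : ∀ a, R a →+* S a) (hf : ∀ a, IsAIC (f a)) :
    IsAIC (Pi.ringHom fun a => (f a).comp (Pi.evalRingHom R a)) :=
  ⟨Function.Injective.piMap fun a => (hf a).1,
    RingHom.IsIntegral.piMap f fun a => (hf a).2.1,
    Tight.piMap f fun a => (hf a).2.2.1,
    AIClosed.pi fun a => (hf a).2.2.2⟩

/-- A finite product of absolute integral closures of domains is an absolute integral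
closure of the product of the domains. -/
theorem isAIC_pi_of_finite (A : Type u) [Finite A]
    (R : A → Type v) [∀ a, CommRing (R a)] [∀ a, IsDomain (R a)]
    (S : A → Type w) [∀ a, CommRing (S a)]
    (f : ∀ a, R a →+* S a) (hf : ∀ a, IsAIC (f a)) :
    IsAIC (Pi.ringHom fun a => (f a).comp (Pi.evalRingHom R a)) :=
  isAIC_pi_of_finite_general A R S f hf
end

section
/- Let S be an absolute integral closure of R and let F be a submonoid of the monoid reg(R) of regular elements of R. Then every element of F is regular in S, and the localization F⁻¹S (with the natural map F⁻¹R → F⁻¹S) is an absolute integral closure of F⁻¹R. -/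
/-- The natural map `F⁻¹R →+* F⁻¹S` induced by `f : R →+* S` on localizations. -/
noncomputable def locMap {R S : Type*} [CommRing R] [CommRing S] (f : R →+* S)
    (F : Submonoid R) : Localization F →+* Localization (F.map f) :=
  IsLocalization.map (Localization (F.map f)) f (Submonoid.le_comap_map F)

/-!
Regularity of `F` in `S` and tightness of `F⁻¹R → F⁻¹S` both come from tightness of `R → S`:
a nonzero element of `S` has a nonzero multiple in `R`, where elements of `F` are regular.
Injectivity and integrality are preserved by any localization. For absolute integral
closedness, a monic `p` over `F⁻¹S` is rescaled to `p.scaleRoots c` for a common denominator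
`c`; this is monic with coefficients in `S`, so it has a root `y` in `S`, and `y / c` is a root
of `p`.
-/

open Polynomial

theorem Tight.map_mem_nonZeroDivisors {R S : Type*} [CommRing R] [CommRing S] {f : R →+* S}
    (hf : Tight f) (hinj : Function.Injective f) {x : R} (hx : x ∈ nonZeroDivisors R) :
    f x ∈ nonZeroDivisors S := by
  rw [mem_nonZeroDivisors_iff_right]
  intro z hz
  by_contra hz0
  obtain ⟨t, r, hr, hzt⟩ := hf z hz0
  have hxr : f (r * x) = f 0 := by
    rw [map_mul, ← hzt, map_zero, mul_right_comm, hz, zero_mul]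
  exact hr (mem_nonZeroDivisors_iff_right.mp hx r (hinj hxr))

theorem tight_locMap {R S : Type*} [CommRing R] [CommRing S] {f : R →+* S} (hf : Tight f)
    {F : Submonoid R} (hF : F ≤ nonZeroDivisors R) : Tight (locMap f F) := by
  intro z hz
  obtain ⟨⟨s, u⟩, hsu⟩ := IsLocalization.surj (F.map f) z
  have hs : s ≠ 0 := by
    rintro rfl
    rw [map_zero] at hsu
    exact hz ((IsLocalization.map_units _ u).mul_left_eq_zero.mp hsu)
  obtain ⟨t, r, hr, hst⟩ := hf s hs
  refine ⟨algebraMap S _ u * algebraMap S _ t, algebraMap R _ r,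
    fun h ↦ hr (IsLocalization.injective (Localization F) hF (by rwa [map_zero])), ?_⟩
  rw [← mul_assoc, hsu, ← map_mul, hst]
  exact (IsLocalization.map_eq (Submonoid.le_comap_map F) r).symm

theorem AIClosed.of_isLocalization {S Sₘ : Type*} [CommRing S] [CommRing Sₘ] [Algebra S Sₘ]
    (M : Submonoid S) [IsLocalization M Sₘ] (hS : AIClosed S) : AIClosed Sₘ := by
  intro p hp hdeg
  set c := IsLocalization.commonDenom M p.support p.coeff
  obtain ⟨q, hq, hqdeg, hqmonic⟩ := lifts_and_natDegree_eq_and_monic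
    (IsLocalization.scaleRoots_commonDenom_mem_lifts M p (hp.leadingCoeff ▸ one_mem _))
    ((monic_scaleRoots_iff _).mpr hp)
  obtain ⟨y, hy⟩ := hS q hqmonic <| by
    rw [← natDegree_pos_iff_degree_pos] at hdeg ⊢
    rwa [hqdeg, natDegree_scaleRoots]
  obtain ⟨u, hu⟩ := IsLocalization.map_units Sₘ c
  refine ⟨↑u⁻¹ * algebraMap S Sₘ y, ?_⟩
  have hscaled := scaleRoots_eval_mul p (↑u⁻¹ * algebraMap S Sₘ y) u
  rw [Units.mul_inv_cancel_left, hu, ← hq, eval_map, eval₂_at_apply, hy.eq_zero, map_zero,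
    ← hu] at hscaled
  exact ((u.isUnit.pow _).mul_right_eq_zero).mp hscaled.symm

/-- If `S` is an absolute integral closure of `R` and `F` is a submonoid of regular
elements of `R`, then the elements of `F` are regular in `S` and `F⁻¹S` is an absolute
integral closure of `F⁻¹R`. -/
theorem isAIC_localization (R S : Type*) [CommRing R] [CommRing S]
    (f : R →+* S) (hf : IsAIC f) (F : Submonoid R) (hF : F ≤ nonZeroDivisors R) :
    (∀ x ∈ F, f x ∈ nonZeroDivisors S) ∧ IsAIC (locMap f F) := by
  obtain ⟨hinj, hint, htight, hai⟩ := hf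
  refine ⟨fun x hx ↦ htight.map_mem_nonZeroDivisors hinj (hF hx), ?_, ?_, tight_locMap htight hF,
    hai.of_isLocalization (F.map f)⟩
  · exact IsLocalization.map_injective_of_injective F (Localization F) _ hinj
  · exact isIntegral_localization' hint F
end

section
/- Let R ⊆ S be an extension of commutative rings and F a submonoid of the regular elements of R. If S is tight over R, then the localization F⁻¹S is tight over F⁻¹R (with respect to the natural map F⁻¹R → F⁻¹S). -/
/-! The two paths `R → S → F⁻¹S` and `R → F⁻¹R → F⁻¹S` agree. The first is tight as a
composite of tight maps, since every localization map is tight; and tightness of a composite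
descends to its second factor as soon as the first one, here `R → F⁻¹R`, is injective. -/

namespace Tight

variable {A B C : Type*} [CommRing A] [CommRing B] [CommRing C]

theorem comp {g : B →+* C} {f : A →+* B} (hg : Tight g) (hf : Tight f) : Tight (g.comp f) := by
  intro c hc
  obtain ⟨t, b, hb, hcb⟩ := hg c hc
  obtain ⟨u, a, ha, hba⟩ := hf b hb
  exact ⟨t * g u, a, ha, by rw [← mul_assoc, hcb, ← map_mul, hba, RingHom.comp_apply]⟩

theorem of_comp {g : B →+* C} {f : A →+* B} (hf : Function.Injective f)
    (h : Tight (g.comp f)) : Tight g := by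
  intro c hc
  obtain ⟨t, a, ha, hca⟩ := h c hc
  exact ⟨t, f a, (map_ne_zero_iff f hf).mpr ha, hca⟩

end Tight

theorem IsLocalization.tight_algebraMap {S T : Type*} [CommRing S] [CommRing T] [Algebra S T]
    (M : Submonoid S) [IsLocalization M T] : Tight (algebraMap S T) := by
  intro x hx
  obtain ⟨⟨a, b⟩, rfl⟩ := IsLocalization.mk'_surjective M x
  have ha : a ≠ 0 := by
    rintro rfl
    exact hx (IsLocalization.mk'_zero _)
  exact ⟨algebraMap S T b, a, ha, IsLocalization.mk'_spec T a b⟩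

theorem tight_localization_general (R S : Type*) [CommRing R] [CommRing S]
    (f : R →+* S)
    (F : Submonoid R) (hF : F ≤ nonZeroDivisors R) (ht : Tight f) :
    Tight (locMap f F) := by
  have hsquare : (locMap f F).comp (algebraMap R (Localization F)) =
      (algebraMap S (Localization (F.map f))).comp f :=
    IsLocalization.map_comp _
  refine Tight.of_comp (IsLocalization.injective (Localization F) hF) ?_
  rw [hsquare]
  exact (IsLocalization.tight_algebraMap (F.map f)).comp ht

/-- Tightness is preserved by localization at a submonoid of regular elements. -/
theorem tight_localization (R S : Type*) [CommRing R] [CommRing S]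
    (f : R →+* S) (hinj : Function.Injective f)
    (F : Submonoid R) (hF : F ≤ nonZeroDivisors R) (ht : Tight f) :
    Tight (locMap f F) :=
  tight_localization_general R S f F hF ht
end

section
/- Let S be an absolute integral closure of R, let q be a prime ideal of S, and let p be the contraction of q to R. Then the induced extension R/p → S/q makes S/q an absolute integral closure of the domain R/p; in particular, S/q is R/p-isomorphic to (R/p)⁺. -/
/-!
Monic polynomials lift along surjections with the same degree, so `S/q` is again ai closed.
Since `S/q` is a domain integral over `R/p`, lying over makes `R/p → S/q` tight. Choose an
`R/p`-embedding of `S/q` into an algebraic closure `K` of `Frac(R/p)`; it is injective by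
tightness. An element of `K` integral over `R/p` is integral over `S/q`. Over an ai closed ring
every monic polynomial is a product of factors `X - t`, so that element annihilates such a
product, and as `K` is a domain it equals one of the `t ∈ S/q`. Hence `S/q` is the integral
closure of `R/p` in `K`, that is `(R/p)⁺`.
-/

open Polynomial

theorem AIClosed.splits {T : Type*} [CommRing T] (hT : AIClosed T) {P : T[X]} (hP : P.Monic) :
    P.Splits := by
  induction hn : P.natDegree generalizing P with
  | zero => rw [hP.natDegree_eq_zero.1 hn]; exact Splits.one
  | succ n ih =>
    have hdeg : 0 < P.degree := natDegree_pos_iff_degree_pos.1 (by omega)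
    have : Nontrivial T := nontrivial_iff.1 (nontrivial_of_ne P 0 (ne_zero_of_degree_gt hdeg))
    obtain ⟨t, ht⟩ := hT P hP hdeg
    obtain ⟨Q, rfl⟩ := dvd_iff_isRoot.2 ht
    have hQ : Q.Monic := (monic_X_sub_C t).of_mul_monic_left hP
    refine (Splits.X_sub_C t).mul (ih hQ ?_)
    rw [(monic_X_sub_C t).natDegree_mul hQ, natDegree_X_sub_C] at hn
    omega

theorem AIClosed.exists_algebraMap_eq_of_isIntegral_s14 {T K : Type*} [CommRing T] [CommRing K]
    [IsDomain K] [Algebra T K] (hT : AIClosed T) {x : K} (hx : IsIntegral T x) :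
    ∃ y, algebraMap T K y = x := by
  obtain ⟨P, hP, hPx⟩ := hx
  obtain ⟨m, hm⟩ := splits_iff_exists_multiset.1 (hT.splits hP)
  rw [hP.leadingCoeff, C_1, one_mul] at hm
  rw [hm, eval₂_multiset_prod, Multiset.prod_eq_zero_iff] at hPx
  simp only [Multiset.map_map, Function.comp_def, Multiset.mem_map, eval₂_sub, eval₂_X,
    eval₂_C] at hPx
  obtain ⟨y, -, hy⟩ := hPx
  exact ⟨y, (sub_eq_zero.1 hy).symm⟩

theorem AIClosed.of_surjective_s14 {S T : Type*} [CommRing S] [CommRing T] (hS : AIClosed S)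
    {g : S →+* T} (hg : Function.Surjective g) : AIClosed T := by
  intro P hP hdeg
  nontriviality T
  obtain ⟨Q, hQP, hQdeg, hQ⟩ :=
    lifts_and_degree_eq_and_monic ((mem_lifts P).2 (map_surjective g hg P)) hP
  obtain ⟨x, hx⟩ := hS Q hQ (hQdeg ▸ hdeg)
  exact ⟨g x, hQP ▸ hx.map⟩

theorem Tight.injective_of_injective_comp {R S K : Type*} [CommRing R] [CommRing S] [CommRing K]
    {f : R →+* S} (hf : Tight f) {h : S →+* K} (hhf : Function.Injective (h.comp f)) :
    Function.Injective h := by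
  refine (injective_iff_map_eq_zero h).2 fun s hs => ?_
  by_contra hs0
  obtain ⟨t, r, hr, hst⟩ := hf s hs0
  refine hr (hhf ?_)
  simp [← hst, hs]

theorem RingHom.IsIntegral.tight {D T : Type*} [CommRing D] [CommRing T] [IsDomain T]
    {g : D →+* T} (hg : g.IsIntegral) : Tight g := by
  have : Nontrivial D := g.domain_nontrivial
  let _ : Algebra D T := g.toAlgebra
  intro s hs
  obtain ⟨r, hr, hr0⟩ := Submodule.exists_mem_ne_zero_of_ne_bot <|
    Ideal.comap_ne_bot_of_integral_mem hs (Ideal.mem_span_singleton_self s) (hg s)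
  obtain ⟨t, ht⟩ := Ideal.mem_span_singleton'.1 (Ideal.mem_comap.1 hr)
  exact ⟨t, r, hr0, (mul_comm s t).trans ht⟩

theorem IsAIC.quotientMap {R S : Type*} [CommRing R] [CommRing S] {f : R →+* S} (hf : IsAIC f)
    (q : Ideal S) [q.IsPrime] : IsAIC (Ideal.quotientMap q f le_rfl) := by
  obtain ⟨-, hint, -, hai⟩ := hf
  have hint' : (Ideal.quotientMap q f le_rfl).IsIntegral := hint.quotient
  exact ⟨Ideal.quotientMap_injective, hint', hint'.tight,
    hai.of_surjective_s14 Ideal.Quotient.mk_surjective⟩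

theorem IsAIC.nonempty_algEquiv_integralClosure {D T K : Type*} [CommRing D] [IsDomain D]
    [CommRing T] [IsDomain T] [Field K] [IsAlgClosed K] [Algebra D T] [Algebra D K]
    [FaithfulSMul D K] (h : IsAIC (algebraMap D T)) :
    Nonempty (T ≃ₐ[D] integralClosure D K) := by
  obtain ⟨hinj, hint, htight, hai⟩ := h
  have : FaithfulSMul D T := (faithfulSMul_iff_algebraMap_injective D T).2 hinj
  have : Algebra.IsIntegral D T := ⟨hint⟩
  let φ : T →ₐ[D] K := IsAlgClosed.lift
  let _ : Algebra T K := φ.toAlgebra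
  have : IsScalarTower D T K := .of_algebraMap_eq fun d => (φ.commutes d).symm
  have hφ : Function.Injective φ := htight.injective_of_injective_comp <| by
    convert FaithfulSMul.algebraMap_injective D K
    exact RingHom.ext φ.commutes
  have : IsIntegralClosure T D K :=
    ⟨hφ, fun {x} => ⟨fun hx => hai.exists_algebraMap_eq_of_isIntegral_s14 (hx.tower_top (A := T)),
      by rintro ⟨y, rfl⟩; exact (Algebra.IsIntegral.isIntegral y).algebraMap⟩⟩
  exact ⟨IsIntegralClosure.equiv D T K (integralClosure D K)⟩

theorem quotient_isAIC_general (R S : Type*) [CommRing R] [CommRing S]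
    (f : R →+* S) (hf : IsAIC f) (q : Ideal S) [q.IsPrime] :
    IsAIC (Ideal.quotientMap q f le_rfl) ∧
      ∃ e : S ⧸ q ≃+* integralClosure (R ⧸ q.comap f)
          (AlgebraicClosure (FractionRing (R ⧸ q.comap f))),
        e.toRingHom.comp (Ideal.quotientMap q f le_rfl) =
          algebraMap (R ⧸ q.comap f)
            (integralClosure (R ⧸ q.comap f)
              (AlgebraicClosure (FractionRing (R ⧸ q.comap f)))) := by
  have hq := hf.quotientMap q
  let _ : Algebra (R ⧸ q.comap f) (S ⧸ q) := (Ideal.quotientMap q f le_rfl).toAlgebra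
  have : FaithfulSMul (R ⧸ q.comap f) (AlgebraicClosure (FractionRing (R ⧸ q.comap f))) :=
    .trans _ (FractionRing (R ⧸ q.comap f)) _
  obtain ⟨e⟩ := IsAIC.nonempty_algEquiv_integralClosure
    (K := AlgebraicClosure (FractionRing (R ⧸ q.comap f))) hq
  exact ⟨hq, e.toRingEquiv, RingHom.ext e.commutes⟩

/-- If `S` is an absolute integral closure of `R`, `q` is a prime of `S` and `p = q ∩ R`,
then `S/q` is an absolute integral closure of the domain `R/p`; in particular `S/q` is
`R/p`-isomorphic to `(R/p)⁺`. -/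
theorem quotient_isAIC (R S : Type*) [CommRing R] [CommRing S]
    (f : R →+* S) (hf : IsAIC f) (q : Ideal S) [q.IsPrime] [(q.comap f).IsPrime] :
    IsAIC (Ideal.quotientMap q f le_rfl) ∧
      ∃ e : S ⧸ q ≃+* integralClosure (R ⧸ q.comap f)
          (AlgebraicClosure (FractionRing (R ⧸ q.comap f))),
        e.toRingHom.comp (Ideal.quotientMap q f le_rfl) =
          algebraMap (R ⧸ q.comap f)
            (integralClosure (R ⧸ q.comap f)
              (AlgebraicClosure (FractionRing (R ⧸ q.comap f)))) :=
  quotient_isAIC_general R S f hf q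
end

section
/- Let S be an absolute integral closure of a commutative ring R, and let p and q be prime ideals of S. Then the ideal p + q is either a prime ideal of S or the unit ideal S. -/
open Polynomial

theorem AIClosed.exists_mul_sub_eq {S : Type*} [CommRing S] (hS : AIClosed S) (s u : S) :
    ∃ t : S, t * (s - t) = u := by
  cases subsingleton_or_nontrivial S
  · exact ⟨0, Subsingleton.elim _ _⟩
  have hmonic : (X ^ 2 - C s * X + C u : S[X]).Monic := by monicity!
  have hdeg : (X ^ 2 - C s * X + C u : S[X]).degree = 2 := by compute_degree!
  obtain ⟨t, ht⟩ := hS _ hmonic (by rw [hdeg]; norm_num)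
  simp only [IsRoot, eval_add, eval_sub, eval_mul, eval_pow, eval_X, eval_C] at ht
  exact ⟨t, by linear_combination -ht⟩

theorem Ideal.mem_sup_of_sub_mem {S : Type*} [CommRing S] {p q : Ideal S} {t x : S}
    (ht : t ∈ p) (hx : x - t ∈ q) : x ∈ p ⊔ q := by
  simpa using Ideal.add_mem _ (Ideal.mem_sup_left ht) (Ideal.mem_sup_right hx)

theorem Ideal.IsPrime.sup_isPrime_or_eq_top {S : Type*} [CommRing S]
    (hS : ∀ s u : S, ∃ t : S, t * (s - t) = u) {p q : Ideal S} (hp : p.IsPrime)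
    (hq : q.IsPrime) : (p ⊔ q).IsPrime ∨ p ⊔ q = ⊤ := by
  refine or_iff_not_imp_right.2 fun htop => ⟨htop, fun {x y} hxy => ?_⟩
  obtain ⟨u, hu, v, hv, huv⟩ := Submodule.mem_sup.1 hxy
  obtain ⟨t, ht⟩ := hS (x + y) u
  have hv' : (x - t) * (y - t) = v := by linear_combination -huv - ht
  rcases hp.mem_or_mem (ht ▸ hu), hq.mem_or_mem (hv' ▸ hv) with
    ⟨htp | hsp, hxq | hyq⟩
  · exact .inl (Ideal.mem_sup_of_sub_mem htp hxq)
  · exact .inr (Ideal.mem_sup_of_sub_mem htp hyq)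
  · refine .inr (Ideal.mem_sup_of_sub_mem hsp ?_)
    rw [show y - (x + y - t) = -(x - t) by ring]
    exact q.neg_mem hxq
  · refine .inl (Ideal.mem_sup_of_sub_mem hsp ?_)
    rw [show x - (x + y - t) = -(y - t) by ring]
    exact q.neg_mem hyq

/-- In an absolute integral closure, the sum of two prime ideals is prime or the
unit ideal. -/
theorem sup_prime_of_isAIC (R S : Type*) [CommRing R] [CommRing S]
    (f : R →+* S) (hf : IsAIC f) (p q : Ideal S) (hp : p.IsPrime) (hq : q.IsPrime) :
    (p ⊔ q).IsPrime ∨ p ⊔ q = ⊤ :=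
  hp.sup_isPrime_or_eq_top hf.2.2.2.exists_mul_sub_eq hq
end

section
/- Let R be a reduced commutative ring with only finitely many minimal prime ideals. Then the canonical ring homomorphism R → ∏_{p ∈ min(R)} R/p is injective, the product ∏_{p ∈ min(R)} R/p is integral over the image of R, and the resulting extension is tight. -/
/-- The canonical map `R → ∏_{p ∈ min(R)} R/p`. -/
def minPrimesQuotMap (R : Type u) [CommRing R] :
    R →+* ∀ p : minimalPrimes R, R ⧸ (p : Ideal R) :=
  Pi.ringHom fun p => Ideal.Quotient.mk (p : Ideal R)

/-!
The kernel of `R → ∏_{p ∈ min(R)} R/p` is the intersection of the minimal primes, i.e. the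
nilradical, which vanishes when `R` is reduced. A finite product of cyclic `R`-modules is a
finite `R`-module, hence integral. For tightness, a nonzero `s` has some nonzero coordinate
`s_p = r + p`; since the minimal primes are finitely many and pairwise incomparable, prime
avoidance gives `a ∉ p` lying in every other minimal prime, and then `s · (a + p) e_p` is the
image of `r a ≠ 0`.
-/

variable {R : Type*} [CommRing R]

@[simp]
theorem minPrimesQuotMap_apply (r : R) (p : minimalPrimes R) :
    minPrimesQuotMap R r p = Ideal.Quotient.mk (p : Ideal R) r :=
  rfl

theorem ker_minPrimesQuotMap : RingHom.ker (minPrimesQuotMap R) = nilradical R := by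
  ext x
  simp [RingHom.mem_ker, funext_iff, Ideal.Quotient.eq_zero_iff_mem, nilradical,
    ← Ideal.sInf_minimalPrimes]

theorem minPrimesQuotMap_injective [IsReduced R] : Function.Injective (minPrimesQuotMap R) :=
  (RingHom.injective_iff_ker_eq_bot _).2 (ker_minPrimesQuotMap.trans (nilradical_eq_zero R))

theorem RingHom.isIntegral_pi_quotient {ι : Type*} [_root_.Finite ι] (I : ι → Ideal R) :
    (RingHom.pi fun i => Ideal.Quotient.mk (I i)).IsIntegral :=
  (RingHom.finite_algebraMap.2 (inferInstance : Module.Finite R (∀ i, R ⧸ I i))).to_isIntegral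

theorem exists_notMem_forall_mem_of_mem_minimalPrimes {I p : Ideal R}
    (hfin : I.minimalPrimes.Finite) (hp : p ∈ I.minimalPrimes) :
    ∃ a ∉ p, ∀ q ∈ I.minimalPrimes, q ≠ p → a ∈ q := by
  have hnle : ¬ (hfin.toFinset.erase p).inf id ≤ p := by
    rw [hp.1.1.inf_le']
    rintro ⟨q, hq, hqp⟩
    rw [Finset.mem_erase, Set.Finite.mem_toFinset] at hq
    exact hq.1 (le_antisymm hqp (hp.2 hq.2.1 hqp))
  obtain ⟨a, ha, hap⟩ := SetLike.not_le_iff_exists.1 hnle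
  exact ⟨a, hap, fun q hq hqp =>
    Finset.inf_le (f := id) (Finset.mem_erase.2 ⟨hqp, hfin.mem_toFinset.2 hq⟩) ha⟩

theorem tight_minPrimesQuotMap (hfin : (minimalPrimes R).Finite) :
    Tight (minPrimesQuotMap R) := by
  intro s hs
  obtain ⟨p, hsp⟩ := Function.ne_iff.1 hs
  obtain ⟨r, hr⟩ := Ideal.Quotient.mk_surjective (s p)
  have hrp : r ∉ (p : Ideal R) := by rwa [← Ideal.Quotient.eq_zero_iff_mem, hr]
  obtain ⟨a, hap, ha⟩ := exists_notMem_forall_mem_of_mem_minimalPrimes hfin p.2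
  refine ⟨Pi.single p (Ideal.Quotient.mk _ a), r * a, ?_, ?_⟩
  · intro hra
    exact p.2.1.1.mul_notMem hrp hap (hra ▸ zero_mem _)
  · funext q
    by_cases hqp : q = p
    · subst hqp
      simp [hr]
    · have haq : a ∈ (q : Ideal R) := ha q q.2 (Subtype.coe_injective.ne hqp)
      simp [Pi.single_eq_of_ne hqp, Ideal.Quotient.eq_zero_iff_mem.2 (Ideal.mul_mem_left _ r haq)]

/-- For a reduced ring `R` with finitely many minimal primes, the canonical map
`R → ∏_{p ∈ min(R)} R/p` is injective, integral, and tight. -/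
theorem minPrimesQuotMap_injective_integral_tight (R : Type u) [CommRing R] [IsReduced R]
    (hfin : (minimalPrimes R).Finite) :
    Function.Injective (minPrimesQuotMap R) ∧ (minPrimesQuotMap R).IsIntegral ∧
      Tight (minPrimesQuotMap R) :=
  have := hfin.to_subtype
  ⟨minPrimesQuotMap_injective, RingHom.isIntegral_pi_quotient _, tight_minPrimesQuotMap hfin⟩
end
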